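/- As τ → 0⁺, Li₂(exp(-πτw)) = -πτw + π²/6 + πτw·log(1 - exp(-πτw)) + O(τ²), for any fixed complex w with Re(w) > 0. -/

import Mathlib

/-! With `q = e^{-z}`, the `n`-th term of `Li₂(q) - π²/6 - z log(1 - q)` is, by an explicit
integration, `-∫₀¹ z² t e^{-(n+1)zt} dt`. Summing the geometric series under the integral
gives, for `Re z > 0`,
  `Li₂(e^{-z}) + z - π²/6 - z log(1 - e^{-z}) = ∫₀¹ z (1 - zt / (e^{zt} - 1)) dt`,
and `u / (e^u - 1) = 1 + O(u)` near `0` makes the integrand `O(|z|²)`. Finally put `z = πτw`. -/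

open Complex Filter Asymptotics Real

/-- The dilogarithm `Li₂(z) = ∑_{n=1}^∞ z^n / n²` for `|z| ≤ 1`. -/
noncomputable def Li2 (z : ℂ) : ℂ := ∑' n : ℕ, z ^ (n + 1) / ((n : ℂ) + 1) ^ 2

open MeasureTheory Topology

lemma integral_ofReal_mul_cexp_neg_mul {b : ℂ} (hb : b ≠ 0) :
    ∫ t in (0 : ℝ)..1, (t : ℂ) * cexp (-(b * t)) = (1 - (1 + b) * cexp (-b)) / b ^ 2 := by
  have hderiv (t : ℝ) : HasDerivAt (fun s : ℝ => -((1 + b * s) * cexp (-(b * s))) / b ^ 2)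
      ((t : ℂ) * cexp (-(b * t))) t := by
    have hlin : HasDerivAt (fun s : ℝ => b * (s : ℂ)) b t := by
      simpa using ((hasDerivAt_id t).ofReal_comp).const_mul b
    refine (((hlin.const_add 1).mul hlin.fun_neg.cexp).fun_neg.div_const (b ^ 2)).congr_deriv ?_
    field_simp
    ring
  rw [intervalIntegral.integral_eq_sub_of_hasDerivAt (fun t _ => hderiv t)
    (Continuous.intervalIntegrable (by fun_prop) _ _)]
  simp only [ofReal_one, mul_one, ofReal_zero, mul_zero, add_zero, neg_zero, Complex.exp_zero]
  ring

lemma integral_mul_exp_neg_mul_le {b : ℝ} (hb : 0 < b) :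
    ∫ t in (0 : ℝ)..1, t * rexp (-(b * t)) ≤ 1 / b ^ 2 := by
  have hreal : ∫ t in (0 : ℝ)..1, t * rexp (-(b * t)) = (1 - (1 + b) * rexp (-b)) / b ^ 2 := by
    rw [← ofReal_inj, ← intervalIntegral.integral_ofReal]
    push_cast
    exact integral_ofReal_mul_cexp_neg_mul (ofReal_ne_zero.2 hb.ne')
  rw [hreal]
  gcongr
  nlinarith [exp_pos (-b)]

lemma summable_one_div_succ_sq : Summable fun n : ℕ => (1 : ℝ) / ((n : ℝ) + 1) ^ 2 := by
  exact_mod_cast (summable_nat_add_iff 1).2 (Real.summable_one_div_nat_pow.2 one_lt_two)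

lemma hasSum_Li2 {q : ℂ} (hq : ‖q‖ ≤ 1) :
    HasSum (fun n : ℕ => q ^ (n + 1) / ((n : ℂ) + 1) ^ 2) (Li2 q) := by
  refine (summable_one_div_succ_sq.of_norm_bounded fun n => ?_).hasSum
  have hn : ‖(n : ℂ) + 1‖ = (n : ℝ) + 1 := by exact_mod_cast Complex.norm_natCast (n + 1)
  rw [norm_div, norm_pow, norm_pow, hn]
  gcongr
  exact pow_le_one₀ (norm_nonneg q) hq

lemma Li2_one : Li2 1 = π ^ 2 / 6 := by
  have h := Complex.hasSum_ofReal.2 ((hasSum_nat_add_iff' 1).2 hasSum_zeta_two)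
  push_cast at h
  simpa [Li2] using h.tsum_eq

lemma hasSum_pow_succ_div_succ {q : ℂ} (hq : ‖q‖ < 1) :
    HasSum (fun n : ℕ => q ^ (n + 1) / ((n : ℂ) + 1)) (-log (1 - q)) := by
  simpa using (hasSum_nat_add_iff' 1).2 (hasSum_taylorSeries_neg_log hq)

lemma hasSum_cexp_neg_succ_mul {u : ℂ} (hu : 0 < u.re) :
    HasSum (fun n : ℕ => cexp (-((n + 1) * u))) (cexp u - 1)⁻¹ := by
  have hr : ‖cexp (-u)‖ < 1 := by simpa [norm_exp] using hu
  have hsum : cexp (-u) * (1 - cexp (-u))⁻¹ = (cexp u - 1)⁻¹ := by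
    rw [Complex.exp_neg]
    field_simp [Complex.exp_ne_zero]
  refine (hsum ▸ (hasSum_geometric_of_norm_lt_one hr).mul_left (cexp (-u))).congr_fun fun n => ?_
  rw [← pow_succ', ← Complex.exp_nat_mul]
  push_cast
  ring_nf

lemma re_le_norm_cexp_sub_one (u : ℂ) : u.re ≤ ‖cexp u - 1‖ := by
  calc u.re ≤ rexp u.re - 1 := by linarith [add_one_le_exp u.re]
    _ = ‖cexp u‖ - ‖(1 : ℂ)‖ := by simp [norm_exp]
    _ ≤ ‖cexp u - 1‖ := norm_sub_norm_le _ _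

lemma norm_div_cexp_sub_one_le {u : ℂ} (hu : 0 < u.re) :
    ‖u / (cexp u - 1)‖ ≤ ‖u‖ / u.re := by
  rw [norm_div]
  gcongr
  exact re_le_norm_cexp_sub_one u

lemma norm_one_sub_div_cexp_sub_one_le {u : ℂ} (hu0 : u ≠ 0) (hu : ‖u‖ ≤ 1 / 2) :
    ‖1 - u / (cexp u - 1)‖ ≤ 2 * ‖u‖ := by
  have hq : ‖cexp u - 1 - u‖ ≤ ‖u‖ ^ 2 := norm_exp_sub_one_sub_id_le (by linarith)
  have hlow : ‖u‖ / 2 ≤ ‖cexp u - 1‖ := by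
    have := norm_sub_norm_le u (cexp u - 1)
    rw [← norm_neg (u - _), neg_sub] at this
    nlinarith [norm_nonneg u]
  have hpos : 0 < ‖cexp u - 1‖ := lt_of_lt_of_le (by positivity) hlow
  rw [one_sub_div (norm_pos_iff.1 hpos), norm_div, div_le_iff₀ hpos]
  nlinarith [norm_nonneg u]

section

variable {z : ℂ}

lemma integral_succ_term (hz : z ≠ 0) (n : ℕ) :
    ∫ t in (0 : ℝ)..1, z ^ 2 * (t * cexp (-((n + 1) * z * t))) =
      1 / ((n : ℂ) + 1) ^ 2 - cexp (-z) ^ (n + 1) / ((n : ℂ) + 1) ^ 2 -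
        z * (cexp (-z) ^ (n + 1) / ((n : ℂ) + 1)) := by
  have hn : (n : ℂ) + 1 ≠ 0 := Nat.cast_add_one_ne_zero n
  rw [intervalIntegral.integral_const_mul,
    integral_ofReal_mul_cexp_neg_mul (mul_ne_zero hn hz), ← Complex.exp_nat_mul]
  push_cast
  field_simp
  ring_nf

lemma integral_norm_succ_term_le (hz : 0 < z.re) (n : ℕ) :
    ∫ t in (0 : ℝ)..1, ‖z ^ 2 * (t * cexp (-((n + 1) * z * t)))‖ ≤
      ‖z‖ ^ 2 / z.re ^ 2 * (1 / ((n : ℝ) + 1) ^ 2) := by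
  have hnorm : ∀ t ∈ Set.uIcc (0 : ℝ) 1, ‖z ^ 2 * (t * cexp (-((n + 1) * z * t)))‖ =
      ‖z‖ ^ 2 * (t * rexp (-(((n + 1) * z.re) * t))) := by
    intro t ht
    rw [Set.uIcc_of_le zero_le_one] at ht
    have hre : (-((n + 1) * z * t)).re = -(((n + 1) * z.re) * t) := by simp
    rw [norm_mul, norm_mul, norm_pow, norm_exp, hre, norm_real, Real.norm_of_nonneg ht.1]
  rw [intervalIntegral.integral_congr hnorm, intervalIntegral.integral_const_mul]
  calc ‖z‖ ^ 2 * ∫ t in (0 : ℝ)..1, t * rexp (-(((n + 1) * z.re) * t))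
      ≤ ‖z‖ ^ 2 * (1 / ((n + 1) * z.re) ^ 2) := by
        gcongr
        exact integral_mul_exp_neg_mul_le (by positivity)
    _ = ‖z‖ ^ 2 / z.re ^ 2 * (1 / ((n : ℝ) + 1) ^ 2) := by
        field_simp

lemma hasSum_succ_term {t : ℝ} (hzt : 0 < (z * t).re) :
    HasSum (fun n : ℕ => z ^ 2 * (t * cexp (-((n + 1) * z * t))))
      (z * (z * t / (cexp (z * t) - 1))) := by
  have h := (hasSum_cexp_neg_succ_mul hzt).mul_left (z ^ 2 * t)
  rw [show z ^ 2 * t * (cexp (z * t) - 1)⁻¹ = z * (z * t / (cexp (z * t) - 1)) by ring] at h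
  exact h.congr_fun fun n => by ring_nf

theorem Li2_exp_neg_eq_integral (hz : 0 < z.re) :
    Li2 (cexp (-z)) = π ^ 2 / 6 + z * log (1 - cexp (-z)) -
      ∫ t in (0 : ℝ)..1, z * (z * t / (cexp (z * t) - 1)) := by
  have hq : ‖cexp (-z)‖ < 1 := by simpa [norm_exp] using hz
  have hz0 : z ≠ 0 := by rintro rfl; simp at hz
  have hterms :
      HasSum (fun n : ℕ => ∫ t in (0 : ℝ)..1, z ^ 2 * (t * cexp (-((n + 1) * z * t))))
        (π ^ 2 / 6 - Li2 (cexp (-z)) + z * log (1 - cexp (-z))) := by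
    simp_rw [integral_succ_term hz0]
    have h := ((Li2_one ▸ hasSum_Li2 (by simp)).sub (hasSum_Li2 hq.le)).sub
      ((hasSum_pow_succ_div_succ hq).mul_left z)
    simpa using h
  have hswap :
      HasSum (fun n : ℕ => ∫ t in (0 : ℝ)..1, z ^ 2 * (t * cexp (-((n + 1) * z * t))))
        (∫ t in (0 : ℝ)..1, ∑' n : ℕ, z ^ 2 * (t * cexp (-((n + 1) * z * t)))) := by
    simp only [intervalIntegral.integral_of_le zero_le_one]
    refine hasSum_integral_of_summable_integral_norm
      (fun n => Continuous.integrableOn_Ioc (by fun_prop)) ?_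
    refine .of_nonneg_of_le (fun n => integral_nonneg fun t => norm_nonneg _) (fun n => ?_)
      (summable_one_div_succ_sq.mul_left (‖z‖ ^ 2 / z.re ^ 2))
    rw [← intervalIntegral.integral_of_le zero_le_one]
    exact integral_norm_succ_term_le hz n
  have htsum : ∫ t in (0 : ℝ)..1, ∑' n : ℕ, z ^ 2 * (t * cexp (-((n + 1) * z * t))) =
      ∫ t in (0 : ℝ)..1, z * (z * t / (cexp (z * t) - 1)) := by
    refine intervalIntegral.integral_congr_ae (ae_of_all _ fun t ht => ?_)
    rw [Set.uIoc_of_le zero_le_one] at ht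
    exact (hasSum_succ_term (by simpa using mul_pos hz ht.1)).tsum_eq
  linear_combination -(hterms.unique hswap).trans htsum

lemma intervalIntegrable_mul_div_cexp_sub_one (hz : 0 < z.re) :
    IntervalIntegrable (fun t : ℝ => z * (z * t / (cexp (z * t) - 1))) volume 0 1 := by
  refine (intervalIntegrable_iff_integrableOn_Ioc_of_le zero_le_one).2
    (IntegrableOn.of_bound (by simp) (by fun_prop : Measurable _).aestronglyMeasurable
      (‖z‖ * (‖z‖ / z.re)) ((ae_restrict_iff' measurableSet_Ioc).2
        (ae_of_all _ fun t ht => ?_)))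
  have hzt : 0 < (z * t).re := by simpa using mul_pos hz ht.1
  calc ‖z * (z * t / (cexp (z * t) - 1))‖ ≤ ‖z‖ * (‖z * t‖ / (z * t).re) := by
        rw [norm_mul]
        gcongr
        exact norm_div_cexp_sub_one_le hzt
    _ = ‖z‖ * (‖z‖ / z.re) := by
        rw [norm_mul, norm_real, Real.norm_of_nonneg ht.1.le, re_mul_ofReal,
          mul_div_mul_right _ _ ht.1.ne']

theorem norm_Li2_exp_neg_remainder_le (hz : 0 < z.re) (hz' : ‖z‖ ≤ 1 / 2) :
    ‖Li2 (cexp (-z)) - (-z + π ^ 2 / 6 + z * log (1 - cexp (-z)))‖ ≤ 2 * ‖z‖ ^ 2 := by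
  have hrem : Li2 (cexp (-z)) - (-z + π ^ 2 / 6 + z * log (1 - cexp (-z))) =
      ∫ t in (0 : ℝ)..1, z * (1 - z * t / (cexp (z * t) - 1)) := by
    simp_rw [mul_one_sub]
    rw [intervalIntegral.integral_sub intervalIntegrable_const
      (intervalIntegrable_mul_div_cexp_sub_one hz), Li2_exp_neg_eq_integral hz]
    simp only [intervalIntegral.integral_const, sub_zero, one_smul]
    ring
  rw [hrem]
  calc _ ≤ 2 * ‖z‖ ^ 2 * |1 - 0| :=
        intervalIntegral.norm_integral_le_of_norm_le_const fun t ht => ?_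
    _ = 2 * ‖z‖ ^ 2 := by simp
  rw [Set.uIoc_of_le zero_le_one] at ht
  obtain ⟨ht0, ht1⟩ := ht
  have hzt : z * t ≠ 0 := mul_ne_zero (by rintro rfl; simp at hz) (ofReal_ne_zero.2 ht0.ne')
  have hle : ‖z * t‖ ≤ ‖z‖ := by
    rw [norm_mul, norm_real, Real.norm_of_nonneg ht0.le]
    exact mul_le_of_le_one_right (norm_nonneg z) ht1
  calc ‖z * (1 - z * t / (cexp (z * t) - 1))‖ ≤ ‖z‖ * (2 * ‖z * t‖) := by
        rw [norm_mul]
        gcongr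
        exact norm_one_sub_div_cexp_sub_one_le hzt (hle.trans hz')
    _ ≤ 2 * ‖z‖ ^ 2 := by nlinarith [norm_nonneg z]

end

theorem isBigO_Li2_exp_neg_remainder :
    (fun z : ℂ => Li2 (cexp (-z)) - (-z + π ^ 2 / 6 + z * log (1 - cexp (-z))))
      =O[𝓝[{z : ℂ | 0 < z.re}] 0] fun z => z ^ 2 := by
  refine IsBigO.of_bound 2 ?_
  filter_upwards [self_mem_nhdsWithin,
    nhdsWithin_le_nhds (Metric.closedBall_mem_nhds (0 : ℂ) (by norm_num : (0 : ℝ) < 1 / 2))]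
    with z hz hz'
  rw [norm_pow]
  exact norm_Li2_exp_neg_remainder_le hz (by simpa using hz')

theorem Li2_exp_asymptotic (w : ℂ) (hw : 0 < w.re) :
    (fun τ : ℝ =>
        Li2 (Complex.exp (-(π : ℂ) * τ * w)) -
          (-(π : ℂ) * τ * w + (π : ℂ) ^ 2 / 6 +
            (π : ℂ) * τ * w * Complex.log (1 - Complex.exp (-(π : ℂ) * τ * w))))
      =O[nhdsWithin 0 (Set.Ioi 0)] fun τ : ℝ => τ ^ 2 := by
  have hlim :
      Tendsto (fun τ : ℝ => (π : ℂ) * τ * w) (𝓝[>] 0) (𝓝[{z : ℂ | 0 < z.re}] 0) := by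
    refine tendsto_nhdsWithin_iff.2 ⟨?_, ?_⟩
    · have hcont : Continuous fun τ : ℝ => (π : ℂ) * τ * w := by fun_prop
      simpa using (hcont.tendsto 0).mono_left nhdsWithin_le_nhds
    · filter_upwards [self_mem_nhdsWithin] with τ (hτ : 0 < τ)
      simpa using mul_pos (mul_pos pi_pos hτ) hw
  have hsq : (fun τ : ℝ => ((π : ℂ) * τ * w) ^ 2) =O[𝓝[>] 0] fun τ => τ ^ 2 :=
    .of_bound (π ^ 2 * ‖w‖ ^ 2) (.of_forall fun τ => le_of_eq (by
      simp only [mul_pow, norm_mul, norm_pow, norm_real, norm_eq_abs, sq_abs]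
      ring))
  simp only [neg_mul]
  exact (isBigO_Li2_exp_neg_remainder.comp_tendsto hlim).trans hsq
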